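/- Let r₀ > 0 and D > 0 satisfy λ(Q[r]) = D·r for all r ∈ [0, r₀], and let h be the probability measure on Q[r₀] given by dh(x) = (2 d(x)/(D r₀²)) dλ(x). Then for every expanding search S on Q such that x ↦ T(S,x) is λ-measurable, the expected normalized search time against h satisfies ∫_{Q[r₀]} (T(S,x)/d(x)) dh(x) ≥ D. -/

import Mathlib

open MeasureTheory Metric

/-!
By time `t` an expanding search has covered mass exactly `t`, so at most mass `t` of `Q[r₀]`
has search time `≤ t`. Under `λ` restricted to `Q[r₀]`, of total mass `C = D r₀`, the search
time therefore dominates in distribution the uniform law on `[0, C]`, and its integral is at least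
`C² / 2`. Away from the null set `{O}` the density of `h` cancels the factor `1 / d(x)`, leaving
`(2 / (D r₀²)) · C² / 2 = D`.
-/

/-- The (expanding) search time of the point `H` under the search `S`: the infimum of the
admissible times `t` (i.e. `0 ≤ t < λ(Q)`) with `H ∈ S t`, equal to `∞` if there is none. -/
noncomputable def searchTime {Q : Type*} [MetricSpace Q] [MeasurableSpace Q]
    (μ : Measure Q) (S : ℝ → Set Q) (H : Q) : ENNReal :=
  ⨅ (t : ℝ) (_ : 0 ≤ t ∧ ENNReal.ofReal t < μ Set.univ ∧ H ∈ S t), ENNReal.ofReal t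

/-- `S` is an expanding search on `Q` rooted at `O`: a family of measurable connected subsets
`S t` for `0 ≤ t < λ(Q)` with `S 0 = {O}`, nondecreasing in `t`, and `λ (S t) = t`. -/
def IsExpandingSearch {Q : Type*} [MetricSpace Q] [MeasurableSpace Q]
    (μ : Measure Q) (O : Q) (S : ℝ → Set Q) : Prop :=
  S 0 = {O} ∧
  (∀ t : ℝ, 0 ≤ t → ENNReal.ofReal t < μ Set.univ →
    MeasurableSet (S t) ∧ IsConnected (S t) ∧ μ (S t) = ENNReal.ofReal t) ∧
  (∀ t t' : ℝ, 0 ≤ t → t ≤ t' → ENNReal.ofReal t' < μ Set.univ → S t ⊆ S t')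

open scoped ENNReal
open Set

namespace IsExpandingSearch

variable {Q : Type*} [MetricSpace Q] [MeasurableSpace Q] {μ : Measure Q} {O : Q} {S : ℝ → Set Q}

theorem mem_of_searchTime_lt (hS : IsExpandingSearch μ O S) {x : Q} {t : ℝ}
    (hx : searchTime μ S x < ENNReal.ofReal t) (ht : ENNReal.ofReal t < μ univ) : x ∈ S t := by
  obtain ⟨s, hs⟩ := iInf_lt_iff.mp hx
  obtain ⟨⟨hs₀, -, hxs⟩, hst⟩ := iInf_lt_iff.mp hs
  exact hS.2.2 s t hs₀ ((ENNReal.ofReal_lt_ofReal_iff_of_nonneg hs₀).mp hst).le ht hxs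

theorem measure_searchTime_le (hS : IsExpandingSearch μ O S) (a : ℝ≥0∞) :
    μ {x | searchTime μ S x ≤ a} ≤ a := by
  refine le_of_forall_gt_imp_ge_of_dense fun c hac => ?_
  rcases le_or_gt (μ univ) c with hc | hc
  · exact (measure_mono (subset_univ _)).trans hc
  obtain ⟨t, ht, rfl⟩ : ∃ t, 0 ≤ t ∧ ENNReal.ofReal t = c :=
    ⟨c.toReal, ENNReal.toReal_nonneg, ENNReal.ofReal_toReal hc.ne_top⟩
  calc μ {x | searchTime μ S x ≤ a}
      ≤ μ (S t) := measure_mono fun x hx => hS.mem_of_searchTime_lt (hx.trans_lt hac) hc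
    _ = ENNReal.ofReal t := (hS.2.1 t ht hc).2.2

end IsExpandingSearch

theorem lintegral_Ioo_ofReal_sub {C : ℝ} (hC : 0 ≤ C) :
    ∫⁻ t in Ioo 0 C, ENNReal.ofReal (C - t) = ENNReal.ofReal (C ^ 2 / 2) := by
  have hint : IntegrableOn (fun t : ℝ => C - t) (Ioo 0 C) :=
    (continuous_const.sub continuous_id).integrableOn_Icc.mono_set Ioo_subset_Icc_self
  have hnn : 0 ≤ᵐ[volume.restrict (Ioo 0 C)] fun t : ℝ => C - t :=
    (ae_restrict_iff' measurableSet_Ioo).mpr (ae_of_all _ fun t ht => sub_nonneg.mpr ht.2.le)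
  rw [← ofReal_integral_eq_lintegral_ofReal hint hnn, ← integral_Ioc_eq_integral_Ioo,
    ← intervalIntegral.integral_of_le hC, intervalIntegral.integral_sub intervalIntegrable_const
      intervalIntegral.intervalIntegrable_id, intervalIntegral.integral_const, integral_id]
  congr 1
  simp only [sub_zero, smul_eq_mul]
  ring

/-- `f` dominates in distribution the uniform law on `[0, ν(α)]`, whose integral is `ν(α)² / 2`. -/
theorem ofReal_sq_div_two_le_lintegral {α : Type*} [MeasurableSpace α] {ν : Measure α}
    [IsFiniteMeasure ν] {f : α → ℝ≥0∞} (hf : Measurable f) (hle : ∀ a, ν {x | f x ≤ a} ≤ a) :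
    ENNReal.ofReal ((ν univ).toReal ^ 2 / 2) ≤ ∫⁻ x, f x ∂ν := by
  set C := (ν univ).toReal
  -- truncating `f` at `C` makes it real-valued, so that the layer cake formula applies
  set g : α → ℝ := fun x => (min (f x) (ENNReal.ofReal C)).toReal
  have hg_le : ∀ x, ENNReal.ofReal (g x) ≤ f x := fun x => by
    rw [ENNReal.ofReal_toReal (min_lt_of_right_lt ENNReal.ofReal_lt_top).ne]
    exact min_le_left _ _
  have hg_lt : ∀ t ∈ Ioo 0 C, {x | t < g x} = {x | f x ≤ ENNReal.ofReal t}ᶜ := by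
    rintro t ⟨ht₀, htC⟩
    ext x
    simp only [g, mem_ofPred_eq, mem_compl_iff, not_le]
    rw [← ENNReal.ofReal_lt_iff_lt_toReal ht₀.le (min_lt_of_right_lt ENNReal.ofReal_lt_top).ne,
      lt_min_iff, and_iff_left ((ENNReal.ofReal_lt_ofReal_iff_of_nonneg ht₀.le).mpr htC)]
  have htail : ∀ t ∈ Ioo 0 C, ENNReal.ofReal (C - t) ≤ ν {x | t < g x} := fun t ht => by
    rw [hg_lt t ht, measure_compl (s := {x | f x ≤ _}) (hf measurableSet_Iic) (measure_ne_top _ _),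
      ENNReal.ofReal_sub _ ht.1.le, ENNReal.ofReal_toReal (measure_ne_top _ _)]
    exact tsub_le_tsub_left (hle _) _
  calc ENNReal.ofReal (C ^ 2 / 2)
      = ∫⁻ t in Ioo 0 C, ENNReal.ofReal (C - t) :=
        (lintegral_Ioo_ofReal_sub ENNReal.toReal_nonneg).symm
    _ ≤ ∫⁻ t in Ioo 0 C, ν {x | t < g x} := setLIntegral_mono' measurableSet_Ioo htail
    _ ≤ ∫⁻ t in Ioi 0, ν {x | t < g x} := lintegral_mono_set Ioo_subset_Ioi_self
    _ = ∫⁻ x, ENNReal.ofReal (g x) ∂ν :=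
        (lintegral_eq_lintegral_meas_lt ν (ae_of_all _ fun _ => ENNReal.toReal_nonneg)
          (hf.min measurable_const).ennreal_toReal.aemeasurable).symm
    _ ≤ ∫⁻ x, f x ∂ν := lintegral_mono hg_le

/-- If `λ(Q[r]) = D·r` for all `r ∈ [0, r₀]` (with `r₀, D > 0`), and `h` is the
probability measure on `Q[r₀]` with density `2 d(x)/(D r₀²)` with respect to `λ`, then every
expanding search `S` (with measurable search-time function) has expected normalized search time
against `h` at least `D`. -/
theorem degree_lower_bound
    {Q : Type*} [MetricSpace Q] [MeasurableSpace Q]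
    (μ : Measure Q) (O : Q)
    (r₀ D : ℝ) (hr₀ : 0 < r₀) (hD : 0 < D)
    (hlin : ∀ r : ℝ, 0 ≤ r → r ≤ r₀ → μ (closedBall O r) = ENNReal.ofReal (D * r))
    (S : ℝ → Set Q) (hS : IsExpandingSearch μ O S)
    (hmeas : Measurable (searchTime μ S)) :
    ENNReal.ofReal D ≤
      ∫⁻ x in closedBall O r₀, (searchTime μ S x / ENNReal.ofReal (dist O x)) *
        ENNReal.ofReal (2 * dist O x / (D * r₀ ^ 2)) ∂μ := by
  set ν := μ.restrict (closedBall O r₀)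
  have hν : ν univ = ENNReal.ofReal (D * r₀) := by
    rw [Measure.restrict_apply_univ, hlin r₀ hr₀.le le_rfl]
  have : IsFiniteMeasure ν := ⟨by simp [hν]⟩
  have hmean : ENNReal.ofReal ((D * r₀) ^ 2 / 2) ≤ ∫⁻ x, searchTime μ S x ∂ν := by
    have := ofReal_sq_div_two_le_lintegral (ν := ν) hmeas fun a =>
      (Measure.restrict_apply_le _ _).trans (hS.measure_searchTime_le a)
    rwa [hν, ENNReal.toReal_ofReal (by positivity)] at this
  have hO : ∀ᵐ x ∂ν, 0 < dist O x := by
    have : μ {O} = 0 := by simpa using hlin 0 le_rfl hr₀.le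
    exact ae_restrict_of_ae <| (measure_eq_zero_iff_ae_notMem.mp this).mono fun x hx =>
      dist_pos.mpr (Ne.symm hx)
  calc ENNReal.ofReal D
      = ENNReal.ofReal (2 / (D * r₀ ^ 2)) * ENNReal.ofReal ((D * r₀) ^ 2 / 2) := by
        rw [← ENNReal.ofReal_mul (by positivity)]
        congr 1
        field_simp
    _ ≤ ENNReal.ofReal (2 / (D * r₀ ^ 2)) * ∫⁻ x, searchTime μ S x ∂ν := by gcongr
    _ = ∫⁻ x, ENNReal.ofReal (2 / (D * r₀ ^ 2)) * searchTime μ S x ∂ν :=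
        (lintegral_const_mul _ hmeas).symm
    _ = _ := lintegral_congr_ae <| hO.mono fun x hx => by
        rw [show 2 * dist O x / (D * r₀ ^ 2) = dist O x * (2 / (D * r₀ ^ 2)) by ring,
          ENNReal.ofReal_mul hx.le, ← mul_assoc,
          ENNReal.div_mul_cancel (ENNReal.ofReal_pos.mpr hx).ne' ENNReal.ofReal_ne_top]
        exact mul_comm _ _
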